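/- arXiv:cs/0508054 — 3 statements merged into one kernel-verified Lean document; each statement's English description precedes it below -/
import Mathlib

section
/- With the setup of the Gallager-type exponent E(ρ) = -log₂( Σ_{a∈X} Σ_{b∈Y} P(a) W(b|a)^{1/(1+ρ)} ( Σ_{a'∈X} Q(a'|a) W(b|a')^{1/(1+ρ)} )^{ρ} ), assuming all probabilities are strictly positive, the derivative of E with respect to ρ at ρ = 0 equals the Kullback–Leibler divergence D(P_{XY} ‖ Q_{XY}), where P_{XY}(a,b) = P(a) W(b|a) and Q_{XY}(a,b) = P(a) Σ_{a'∈X} Q(a'|a) W(b|a'). -/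
/-- The derivative of the Gallager-type exponent at `ρ = 0` is the
KL divergence `D(P_{XY} ‖ Q_{XY})` (base-2 logarithms). -/
theorem gallager_exponent_deriv_at_zero
    {X Y : Type*} [Fintype X] [Fintype Y] [Nonempty X] [Nonempty Y]
    (P : X → ℝ) (W : X → Y → ℝ) (Q : X → X → ℝ)
    (hP0 : ∀ a, 0 < P a) (hP1 : ∀ a, P a ≤ 1) (hPsum : ∑ a, P a = 1)
    (hW0 : ∀ a b, 0 < W a b) (hW1 : ∀ a b, W a b ≤ 1)
    (hWsum : ∀ a, ∑ b, W a b = 1)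
    (hQ0 : ∀ a a', 0 < Q a a') (hQ1 : ∀ a a', Q a a' ≤ 1)
    (hQsum : ∀ a, ∑ a', Q a a' = 1)
    (E : ℝ → ℝ)
    (hE : ∀ ρ : ℝ, E ρ =
      - Real.logb 2 (∑ a, ∑ b,
          P a * (W a b) ^ (1 / (1 + ρ)) *
            (∑ a', Q a a' * (W a' b) ^ (1 / (1 + ρ))) ^ ρ)) :
    HasDerivAt E
      (∑ a, ∑ b, (P a * W a b) *
        Real.logb 2 ((P a * W a b) / (P a * ∑ a', Q a a' * W a' b))) 0 := by
  classical
  -- notation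
  set S : X → Y → ℝ := fun a b => ∑ a', Q a a' * W a' b with hSdef
  have hSpos : ∀ a b, 0 < S a b := by
    intro a b
    exact Finset.sum_pos (fun a' _ => mul_pos (hQ0 a a') (hW0 a' b)) Finset.univ_nonempty
  set F : ℝ → ℝ := fun ρ => ∑ a, ∑ b,
      P a * (W a b) ^ (1 / (1 + ρ)) *
        (∑ a', Q a a' * (W a' b) ^ (1 / (1 + ρ))) ^ ρ with hFdef
  -- derivative of the exponent 1/(1+ρ) at 0
  have hu : HasDerivAt (fun ρ : ℝ => 1 / (1 + ρ)) (-1) 0 := by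
    have h1 : HasDerivAt (fun ρ : ℝ => 1 + ρ) 1 0 := (hasDerivAt_id 0).const_add 1
    have h2 := h1.fun_inv (by norm_num)
    simpa [one_div] using h2
  -- derivative of W^(1/(1+ρ))
  have hf1 : ∀ a b, HasDerivAt (fun ρ : ℝ => (W a b) ^ (1 / (1 + ρ)))
      (-(W a b * Real.log (W a b))) 0 := by
    intro a b
    have hg := (Real.hasStrictDerivAt_const_rpow (hW0 a b) (1 / (1 + (0:ℝ)))).hasDerivAt
    have h := HasDerivAt.comp (0:ℝ) hg hu
    have heq : (W a b) ^ (1 / (1 + (0:ℝ))) * Real.log (W a b) * (-1)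
        = -(W a b * Real.log (W a b)) := by
      norm_num
    rw [heq] at h
    exact h
  -- derivative of the inner sum S(ρ)
  have hfS : ∀ a b, HasDerivAt (fun ρ : ℝ => ∑ a', Q a a' * (W a' b) ^ (1 / (1 + ρ)))
      (∑ a', Q a a' * -(W a' b * Real.log (W a' b))) 0 := by
    intro a b
    exact HasDerivAt.fun_sum fun a' _ => (hf1 a' b).const_mul (Q a a')
  have hS0 : ∀ a b, (∑ a', Q a a' * (W a' b) ^ (1 / (1 + (0:ℝ)))) = S a b := by
    intro a b
    simp [hSdef]
  -- derivative of S(ρ)^ρ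
  have hf2 : ∀ a b, HasDerivAt (fun ρ : ℝ => (∑ a', Q a a' * (W a' b) ^ (1 / (1 + ρ))) ^ ρ)
      (Real.log (S a b)) 0 := by
    intro a b
    have hpos : 0 < ∑ a', Q a a' * (W a' b) ^ (1 / (1 + (0:ℝ))) := by
      rw [hS0 a b]; exact hSpos a b
    have h := (hfS a b).rpow (hasDerivAt_id 0) hpos
    simp only [id_eq, hS0 a b, Real.rpow_zero] at h
    simpa using h
  -- derivative of each term
  have hterm : ∀ a b, HasDerivAt
      (fun ρ : ℝ => P a * (W a b) ^ (1 / (1 + ρ)) *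
        (∑ a', Q a a' * (W a' b) ^ (1 / (1 + ρ))) ^ ρ)
      (P a * W a b * (Real.log (S a b) - Real.log (W a b))) 0 := by
    intro a b
    have h := ((hf1 a b).const_mul (P a)).fun_mul (hf2 a b)
    refine h.congr_deriv ?_
    rw [Real.rpow_zero]
    norm_num
    ring
  -- derivative of F
  set D : ℝ := ∑ a, ∑ b, P a * W a b * (Real.log (S a b) - Real.log (W a b)) with hDdef
  have hFderiv : HasDerivAt F D 0 := by
    rw [hFdef, hDdef]
    exact HasDerivAt.fun_sum fun a _ => HasDerivAt.fun_sum fun b _ => hterm a b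
  have hF0 : F 0 = 1 := by
    rw [hFdef]
    simp only [Real.rpow_zero]
    norm_num
    rw [← hPsum]
    refine Finset.sum_congr rfl fun a _ => ?_
    rw [← Finset.mul_sum, hWsum a, mul_one]
  -- rewrite E
  have hEeq : E = fun ρ => -(Real.log (F ρ) / Real.log 2) := by
    funext ρ
    rw [hE ρ, Real.logb, hFdef]
  rw [hEeq]
  have hlog : HasDerivAt (fun ρ => -(Real.log (F ρ) / Real.log 2)) (-(D / Real.log 2)) 0 := by
    have h := (hFderiv.log (by rw [hF0]; norm_num)).div_const (Real.log 2)
    rw [hF0] at h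
    simpa using h.fun_neg
  convert hlog using 1
  -- identify the KL sum with -(D / log 2)
  have hterm2 : ∀ a b, P a * W a b *
      Real.logb 2 (P a * W a b / (P a * ∑ a', Q a a' * W a' b))
      = -(P a * W a b * (Real.log (S a b) - Real.log (W a b)) / Real.log 2) := by
    intro a b
    have hPa := (hP0 a).ne'
    have hWab := (hW0 a b).ne'
    have hSab := (hSpos a b).ne'
    have hSs : (∑ a', Q a a' * W a' b) = S a b := rfl
    rw [hSs, Real.logb, mul_div_mul_left _ _ hPa, Real.log_div hWab hSab]
    ring
  calc (∑ a, ∑ b, P a * W a b *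
        Real.logb 2 (P a * W a b / (P a * ∑ a', Q a a' * W a' b)))
      = ∑ a, ∑ b, -(P a * W a b * (Real.log (S a b) - Real.log (W a b)) / Real.log 2) := by
        exact Finset.sum_congr rfl fun a _ => Finset.sum_congr rfl fun b _ => hterm2 a b
    _ = -(D / Real.log 2) := by
        rw [hDdef]
        simp only [Finset.sum_neg_distrib, ← Finset.sum_div]
end

section
/- Fix a sequence x ∈ Aⁿ with empirical type γ (γ(a) = (1/n)|{i : x_i = a}|), and fix a joint type λ on A × A whose first marginal is γ. Then the number of sequences y ∈ Aⁿ such that the pair (x,y) has joint type λ is at most 2^{n(H(λ) − H(γ))}, where H denotes base-2 Shannon entropy. -/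
open scoped Classical

/-- Grouping a product over indices by fibers of a map, extended over the whole codomain. -/
lemma prod_fiber_univ' {α β M : Type*} [Fintype α] [Fintype β] [DecidableEq β] [CommMonoid M]
    (f : β → M) (g : α → β) :
    ∏ a, f (g a) = ∏ b, f b ^ (Finset.univ.filter fun a => g a = b).card := by
  refine (Finset.prod_comp (s := (Finset.univ : Finset α)) f g).trans ?_
  refine Finset.prod_subset (Finset.subset_univ _) ?_
  intro b _ hb
  have h : (Finset.univ.filter fun a => g a = b) = ∅ := by
    ext a
    simp only [Finset.mem_filter, Finset.mem_univ, true_and, Finset.notMem_empty, iff_false]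
    intro h
    exact hb (Finset.mem_image.2 ⟨a, Finset.mem_univ a, h⟩)
  simp [h]

/-- The number of sequences `y` having joint type `l` with a fixed sequence `x`
of type `γ` is at most `2^{n(H(l) − H(γ))}` (base-2 entropies). -/
theorem card_joint_type_class_le
    {A : Type*} [Fintype A] (n : ℕ) (hn : 0 < n)
    (x : Fin n → A) (γ : A → ℚ) (l : A × A → ℚ)
    (hγ : ∀ a, γ a = ((Finset.univ.filter (fun i => x i = a)).card : ℚ) / n)
    (hmarg : ∀ a, ∑ b, l (a, b) = γ a)
    (Hl Hγ : ℝ)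
    (hHl : Hl = -∑ p : A × A, (l p : ℝ) * Real.logb 2 (l p))
    (hHγ : Hγ = -∑ a : A, (γ a : ℝ) * Real.logb 2 (γ a)) :
    ((Finset.univ.filter (fun y : Fin n → A => ∀ a b,
        ((Finset.univ.filter (fun i => x i = a ∧ y i = b)).card : ℚ) / n
          = l (a, b))).card : ℝ)
      ≤ 2 ^ ((n : ℝ) * (Hl - Hγ)) := by
  classical
  set T := (Finset.univ.filter (fun y : Fin n → A => ∀ a b,
      ((Finset.univ.filter (fun i => x i = a ∧ y i = b)).card : ℚ) / n = l (a, b))) with hTdef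
  rcases T.eq_empty_or_nonempty with hTe | ⟨y0, hy0⟩
  · rw [hTe]
    simpa using (Real.rpow_pos_of_pos two_pos _).le
  have hnQ : (n : ℚ) ≠ 0 := Nat.cast_ne_zero.2 hn.ne'
  have hy0' : ∀ a b, ((Finset.univ.filter (fun i => x i = a ∧ y0 i = b)).card : ℚ) / n
      = l (a, b) := (Finset.mem_filter.1 hy0).2
  have hl_nonneg : ∀ p : A × A, 0 ≤ l p := by
    rintro ⟨a, b⟩
    rw [← hy0' a b]
    positivity
  have hγ_nonneg : ∀ a, 0 ≤ γ a := by
    intro a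
    rw [hγ a]
    positivity
  have hle : ∀ a b, l (a, b) ≤ γ a := by
    intro a b
    rw [← hmarg a]
    exact Finset.single_le_sum (fun b _ => hl_nonneg (a, b)) (Finset.mem_univ b)
  have hγx : ∀ i : Fin n, 0 < γ (x i) := by
    intro i
    rw [hγ]
    apply div_pos _ (by exact_mod_cast hn)
    have hi : i ∈ Finset.univ.filter (fun j => x j = x i) := by simp
    exact_mod_cast Finset.card_pos.2 ⟨i, hi⟩
  -- the conditional distribution
  set q : A → A → ℝ := fun a b => if γ a = 0 then 0 else (l (a, b) : ℝ) / (γ a : ℝ) with hqdef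
  have hq_nonneg : ∀ a b, 0 ≤ q a b := by
    intro a b
    simp only [hqdef]
    split
    · exact le_refl _
    · have h1 : (0:ℝ) ≤ (l (a, b) : ℝ) := by exact_mod_cast hl_nonneg (a, b)
      have h2 : (0:ℝ) ≤ (γ a : ℝ) := by exact_mod_cast hγ_nonneg a
      exact div_nonneg h1 h2
  have hq_sum : ∀ a, γ a ≠ 0 → ∑ b, q a b = 1 := by
    intro a ha
    simp only [hqdef, if_neg ha]
    rw [← Finset.sum_div]
    have : ∑ b, (l (a, b) : ℝ) = (γ a : ℝ) := by exact_mod_cast congrArg Rat.cast (hmarg a)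
    rw [this, div_self (by exact_mod_cast ha)]
  -- key computation: for y ∈ T the product of conditionals is exactly 2^{-n(Hl - Hγ)}
  have key : ∀ y ∈ T, ∏ i, q (x i) (y i) = (2:ℝ) ^ (-((n:ℝ) * (Hl - Hγ))) := by
    intro y hy
    have hyT : ∀ a b, ((Finset.univ.filter (fun i => x i = a ∧ y i = b)).card : ℚ) / n
        = l (a, b) := (Finset.mem_filter.1 hy).2
    have h1 : ∏ i, q (x i) (y i)
        = ∏ p : A × A, (q p.1 p.2) ^ (Finset.univ.filter (fun i => (x i, y i) = p)).card := by
      exact prod_fiber_univ' (fun p : A × A => q p.1 p.2) (fun i => (x i, y i))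
    have hc : ∀ p : A × A, ((Finset.univ.filter (fun i => (x i, y i) = p)).card : ℚ)
        = n * l p := by
      rintro ⟨a, b⟩
      have hset : (Finset.univ.filter (fun i => (x i, y i) = (a, b)))
          = (Finset.univ.filter (fun i => x i = a ∧ y i = b)) := by
        apply Finset.filter_congr
        intro i _
        simp [Prod.ext_iff]
      rw [hset, ← hyT a b]
      field_simp
    have h2 : ∀ p : A × A, (q p.1 p.2) ^ (Finset.univ.filter (fun i => (x i, y i) = p)).card
        = (2:ℝ) ^ (((n:ℝ) * (l p : ℝ)) * (Real.logb 2 (l p) - Real.logb 2 (γ p.1))) := by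
      intro p
      by_cases hp : l p = 0
      · have hc0 : (Finset.univ.filter (fun i => (x i, y i) = p)).card = 0 := by
          have := hc p
          rw [hp, mul_zero] at this
          exact_mod_cast this
        rw [hc0, hp]
        simp
      · have hlp : 0 < l p := lt_of_le_of_ne (hl_nonneg p) (Ne.symm hp)
        have hγp : 0 < γ p.1 := lt_of_lt_of_le hlp (hle p.1 p.2)
        have hq_eq : q p.1 p.2 = (l p : ℝ) / (γ p.1 : ℝ) := by
          simp only [hqdef, if_neg hγp.ne']
        have hqpos : 0 < q p.1 p.2 := by
          rw [hq_eq]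
          apply div_pos <;> exact_mod_cast (by assumption)
        have hcR : ((Finset.univ.filter (fun i => (x i, y i) = p)).card : ℝ)
            = (n:ℝ) * (l p : ℝ) := by exact_mod_cast hc p
        have hlog : Real.logb 2 (q p.1 p.2) = Real.logb 2 (l p) - Real.logb 2 (γ p.1) := by
          rw [hq_eq]
          exact Real.logb_div (by exact_mod_cast hlp.ne') (by exact_mod_cast hγp.ne')
        rw [← hcR, ← hlog, mul_comm ((Finset.univ.filter (fun i => (x i, y i) = p)).card : ℝ),
          Real.rpow_mul (by norm_num : (0:ℝ) ≤ 2), Real.rpow_logb two_pos (by norm_num) hqpos,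
          Real.rpow_natCast]
    rw [h1, Finset.prod_congr rfl (fun p _ => h2 p), ← Real.rpow_sum_of_pos two_pos]
    congr 1
    have hsum1 : ∑ p : A × A, (l p : ℝ) * Real.logb 2 (γ p.1)
        = ∑ a : A, (γ a : ℝ) * Real.logb 2 (γ a) := by
      rw [Fintype.sum_prod_type]
      refine Finset.sum_congr rfl (fun a _ => ?_)
      have hs : ∑ b, (l (a, b) : ℝ) = (γ a : ℝ) := by
        exact_mod_cast congrArg Rat.cast (hmarg a)
      calc ∑ b : A, (l (a, b) : ℝ) * Real.logb 2 (γ a)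
          = (∑ b : A, (l (a, b) : ℝ)) * Real.logb 2 (γ a) := (Finset.sum_mul ..).symm
        _ = (γ a : ℝ) * Real.logb 2 (γ a) := by rw [hs]
    have : ∑ p : A × A, ((n:ℝ) * (l p : ℝ)) * (Real.logb 2 (l p) - Real.logb 2 (γ p.1))
        = (n:ℝ) * ((∑ p : A × A, (l p : ℝ) * Real.logb 2 (l p))
            - ∑ p : A × A, (l p : ℝ) * Real.logb 2 (γ p.1)) := by
      rw [mul_sub, Finset.mul_sum, Finset.mul_sum, ← Finset.sum_sub_distrib]
      refine Finset.sum_congr rfl (fun p _ => ?_)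
      ring
    rw [this, hsum1, hHl, hHγ]
    ring
  -- summing
  have htotal : ∑ y : Fin n → A, ∏ i, q (x i) (y i) = 1 := by
    rw [← Fintype.piFinset_univ, ← Finset.prod_univ_sum]
    rw [Finset.prod_congr rfl (fun i _ => hq_sum (x i) (hγx i).ne')]
    simp
  have hsum_le : ∑ y ∈ T, ∏ i, q (x i) (y i) ≤ 1 := by
    rw [← htotal]
    exact Finset.sum_le_sum_of_subset_of_nonneg (Finset.subset_univ T)
      (fun y _ _ => Finset.prod_nonneg fun i _ => hq_nonneg _ _)
  have hsumT : ∑ y ∈ T, ∏ i, q (x i) (y i)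
      = (T.card : ℝ) * (2:ℝ) ^ (-((n:ℝ) * (Hl - Hγ))) := by
    rw [Finset.sum_congr rfl key, Finset.sum_const, nsmul_eq_mul]
  rw [hsumT] at hsum_le
  rw [Real.rpow_neg (by norm_num : (0:ℝ) ≤ 2), ← div_eq_mul_inv,
    div_le_one (Real.rpow_pos_of_pos two_pos _)] at hsum_le
  exact hsum_le
end

section
/- Let φ* be a probability distribution on a finite set T and for each n let S_n be the set of types with denominator n on T. Suppose for each type φ ∈ S_n, the total probability of all outcomes of type φ satisfies P_n(φ) ≤ (n+1)^{|T|} · 2^{−n D(φ‖φ*)} with D the base-2 KL divergence. Then for any ε > 0, the total probability of all types φ with D(φ‖φ*) ≥ ε tends to 0 as n → ∞, i.e., the type of a sample is typical (KL-close to φ*) with probability tending to 1. -/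
open scoped Classical
open Filter

/-- If each type class has probability at most `(n+1)^{|T|} 2^{−n D(φ‖φ*)}`,
then the total probability of all types KL-far from `φ*` tends to `0`:
the sampled type is typical with probability tending to one. -/
theorem atypical_types_prob_tendsto_zero
    {T : Type*} [Fintype T] [Nonempty T]
    (φstar : T → ℝ) (hφ0 : ∀ t, 0 < φstar t) (hφsum : ∑ t, φstar t = 1)
    (P : (n : ℕ) → (T → Fin (n + 1)) → ℝ)
    (hP0 : ∀ n c, 0 ≤ P n c)
    (hPbound : ∀ n : ℕ, ∀ c : T → Fin (n + 1), (∑ t, (c t : ℕ)) = n →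
      P n c ≤ ((n : ℝ) + 1) ^ (Fintype.card T) *
        2 ^ (-(n : ℝ) *
          (∑ t, ((c t : ℕ) : ℝ) / n *
            Real.logb 2 ((((c t : ℕ) : ℝ) / n) / φstar t)))) :
    ∀ ε : ℝ, 0 < ε →
      Tendsto (fun n : ℕ =>
          ∑ c ∈ Finset.univ.filter (fun c : T → Fin (n + 1) =>
              (∑ t, (c t : ℕ)) = n ∧
              ε ≤ ∑ t, ((c t : ℕ) : ℝ) / n *
                Real.logb 2 ((((c t : ℕ) : ℝ) / n) / φstar t)),
            P n c)
        atTop (nhds 0) := by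
  intro ε hε
  set k := Fintype.card T with hk
  set r : ℝ := (2 : ℝ) ^ (-ε) with hr
  have hr0 : 0 < r := Real.rpow_pos_of_pos (by norm_num) _
  have hr1 : r < 1 := by
    rw [hr]
    apply Real.rpow_lt_one_of_one_lt_of_neg (by norm_num) (by linarith)
  -- the dominating sequence
  have hg : Tendsto (fun n : ℕ => ((n : ℝ) + 1) ^ (2 * k) * r ^ n) atTop (nhds 0) := by
    have h1 : Tendsto (fun n : ℕ => (n : ℝ) ^ (2 * k) * r ^ n) atTop (nhds 0) := by
      apply (summable_pow_mul_geometric_of_norm_lt_one (2 * k)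
        (r := r) (by rw [Real.norm_eq_abs, abs_of_pos hr0]; exact hr1)).tendsto_atTop_zero
    have h2 := (h1.comp (tendsto_add_atTop_nat 1)).mul_const r⁻¹
    rw [zero_mul] at h2
    convert h2 using 2 with n
    simp only [Function.comp_apply]
    push_cast
    rw [pow_succ]
    field_simp
  apply squeeze_zero (fun n => Finset.sum_nonneg fun c _ => hP0 n c) _ hg
  intro n
  -- bound each term
  have hterm : ∀ c ∈ Finset.univ.filter (fun c : T → Fin (n + 1) =>
      (∑ t, (c t : ℕ)) = n ∧
      ε ≤ ∑ t, ((c t : ℕ) : ℝ) / n *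
        Real.logb 2 ((((c t : ℕ) : ℝ) / n) / φstar t)),
      P n c ≤ ((n : ℝ) + 1) ^ k * 2 ^ (-(n : ℝ) * ε) := by
    intro c hc
    rw [Finset.mem_filter] at hc
    obtain ⟨-, hsum, hD⟩ := hc
    refine (hPbound n c hsum).trans ?_
    apply mul_le_mul_of_nonneg_left _ (by positivity)
    apply Real.rpow_le_rpow_of_exponent_le (by norm_num)
    have := mul_le_mul_of_nonneg_left hD (Nat.cast_nonneg (α := ℝ) n)
    nlinarith
  calc ∑ c ∈ Finset.univ.filter _, P n c
      ≤ (Finset.univ.filter (fun c : T → Fin (n + 1) =>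
          (∑ t, (c t : ℕ)) = n ∧
          ε ≤ ∑ t, ((c t : ℕ) : ℝ) / n *
            Real.logb 2 ((((c t : ℕ) : ℝ) / n) / φstar t))).card
          • (((n : ℝ) + 1) ^ k * 2 ^ (-(n : ℝ) * ε)) :=
        Finset.sum_le_card_nsmul _ _ _ hterm
    _ ≤ ((n : ℝ) + 1) ^ (2 * k) * r ^ n := by
        rw [nsmul_eq_mul]
        have hcard : ((Finset.univ.filter (fun c : T → Fin (n + 1) =>
            (∑ t, (c t : ℕ)) = n ∧
            ε ≤ ∑ t, ((c t : ℕ) : ℝ) / n *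
              Real.logb 2 ((((c t : ℕ) : ℝ) / n) / φstar t))).card : ℝ)
            ≤ ((n : ℝ) + 1) ^ k := by
          have h1 : (Finset.univ.filter (fun c : T → Fin (n + 1) =>
              (∑ t, (c t : ℕ)) = n ∧
              ε ≤ ∑ t, ((c t : ℕ) : ℝ) / n *
                Real.logb 2 ((((c t : ℕ) : ℝ) / n) / φstar t))).card
              ≤ Fintype.card (T → Fin (n + 1)) :=
            (Finset.card_filter_le _ _).trans (by simp)
          calc ((Finset.univ.filter _).card : ℝ)
              ≤ (Fintype.card (T → Fin (n + 1)) : ℝ) := by exact_mod_cast h1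
            _ = ((n : ℝ) + 1) ^ k := by
                rw [Fintype.card_fun, Fintype.card_fin]; push_cast; ring
        have hrn : (2 : ℝ) ^ (-(n : ℝ) * ε) = r ^ n := by
          rw [hr, ← Real.rpow_natCast ((2:ℝ) ^ (-ε)) n, ← Real.rpow_mul (by norm_num)]
          ring_nf
        rw [hrn, two_mul, pow_add]
        have h2 : (0 : ℝ) ≤ ((n : ℝ) + 1) ^ k * r ^ n := by positivity
        nlinarith [pow_nonneg (pow_pos hr0 n).le 1]
end
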